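/- arXiv:1806.07962 — 7 statements merged into one kernel-verified Lean document; each statement's English description precedes it below -/
import Mathlib

section
/- For every integer m ≥ 0, ∫₀^π θ sin θ cos^m θ dθ = (√π / (2(m+1))) · (Γ(m/2 + 1)/Γ(m/2 + 3/2)) · (1 − (−1)^m) − (π/(m+1)) · (−1)^{m+1}. -/
/-!
Integrating by parts against `d(-cos^(m+1) x / (m+1))` leaves the boundary term
`π (-1)^m / (m+1)` plus `(m+1)⁻¹ ∫₀^π cos^(m+1)`. By the Wallis reduction formula
`∫₀^π cos^(n+2) = (n+1)/(n+2) ∫₀^π cos^n`, a recursion that `Γ(s+1) = s Γ(s)` makes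
`√π Γ((n+1)/2) / Γ(n/2+1)` satisfy as well, that integral is this Gamma quotient for even `n`
and `0` for odd `n`.
-/

open Real intervalIntegral

theorem integral_cos_pow_eq_Gamma (n : ℕ) :
    ∫ x in (0:ℝ)..π, cos x ^ n
      = √π * (Gamma ((n + 1) / 2) / Gamma (n / 2 + 1)) * ((1 + (-1) ^ n) / 2) := by
  induction n using Nat.twoStepInduction with
  | zero =>
    simp only [CharP.cast_eq_zero, zero_add, zero_div, Gamma_one, div_one, pow_zero,
      integral_one, sub_zero]
    rw [Gamma_one_half_eq, mul_self_sqrt pi_pos.le]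
    ring
  | one => norm_num
  | more n ih _ =>
    have hΓnum : Gamma (((n + 2 : ℕ) + 1 : ℝ) / 2) = (n + 1) / 2 * Gamma ((n + 1) / 2) := by
      rw [← Gamma_add_one (by positivity)]; push_cast; ring_nf
    have hΓden : Gamma (((n + 2 : ℕ) : ℝ) / 2 + 1) = (n / 2 + 1) * Gamma (n / 2 + 1) := by
      rw [← Gamma_add_one (by positivity)]; push_cast; ring_nf
    have hΓ : Gamma ((n : ℝ) / 2 + 1) ≠ 0 := (Gamma_pos_of_pos (by positivity)).ne'
    rw [integral_cos_pow, ih, hΓnum, hΓden]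
    simp only [sin_zero, sin_pi, mul_zero, sub_zero, zero_div, zero_add, pow_add, neg_one_sq]
    field_simp

theorem integral_mul_sin_mul_cos_pow (a b : ℝ) (m : ℕ) :
    ∫ x in a..b, x * sin x * cos x ^ m
      = (a * cos a ^ (m + 1) - b * cos b ^ (m + 1) + ∫ x in a..b, cos x ^ (m + 1)) / (m + 1) := by
  have hv : ∀ x ∈ Set.uIcc a b,
      HasDerivAt (fun y => -cos y ^ (m + 1) / (m + 1)) (sin x * cos x ^ m) x := fun x _ => by
    refine (((hasDerivAt_cos x).pow (m + 1)).neg.div_const ((m : ℝ) + 1)).congr_deriv ?_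
    push_cast
    field_simp
  have := integral_mul_deriv_eq_deriv_mul (fun x _ => hasDerivAt_id' x) hv
    (continuous_const.intervalIntegrable _ _)
    ((by fun_prop : Continuous fun x => sin x * cos x ^ m).intervalIntegrable _ _)
  simp only [mul_assoc, one_mul] at this ⊢
  rw [this, intervalIntegral.integral_div, intervalIntegral.integral_neg]
  ring

theorem stmt_4 (m : ℕ) :
    ∫ θ in (0:ℝ)..Real.pi, θ * Real.sin θ * Real.cos θ ^ m
      = Real.sqrt Real.pi / (2 * (m + 1)) *
          (Real.Gamma ((m : ℝ) / 2 + 1) / Real.Gamma ((m : ℝ) / 2 + 3 / 2)) *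
          (1 - (-1 : ℝ) ^ m)
        - Real.pi / (m + 1) * (-1 : ℝ) ^ (m + 1) := by
  rw [integral_mul_sin_mul_cos_pow, integral_cos_pow_eq_Gamma]
  have hnum : ((m + 1 : ℕ) + 1 : ℝ) / 2 = m / 2 + 1 := by push_cast; ring
  have hden : ((m + 1 : ℕ) : ℝ) / 2 + 1 = m / 2 + 3 / 2 := by push_cast; ring
  rw [hnum, hden]
  simp only [cos_zero, cos_pi, zero_mul, pow_succ]
  have hm : (m : ℝ) + 1 ≠ 0 := by positivity
  field_simp
  ring
end

section
/- For real x with |x| < 1, ∫₀^π θ sin θ / (1 − x² cos² θ) dθ = (π/(2x)) · log((1+x)/(1−x)), i.e. equals (π/x) · artanh(x) (for x ≠ 0). -/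
/-!
Reflecting θ ↦ π - θ leaves sin θ / (1 - x² cos² θ) unchanged, so the weight θ can be replaced by
its mean π / 2. The remaining integral has the antiderivative -artanh (x cos θ) / x.
-/

open Real Set MeasureTheory intervalIntegral

theorem Real.hasDerivAt_artanh {y : ℝ} (hy : y ∈ Ioo (-1) 1) :
    HasDerivAt artanh (1 - y ^ 2)⁻¹ y := by
  have hp : 0 < 1 + y := by linarith [hy.1]
  have hm : 0 < 1 - y := by linarith [hy.2]
  have hlog : HasDerivAt (fun t => 1 / 2 * (log (1 + t) - log (1 - t)))
      (1 / 2 * (1 / (1 + y) - -1 / (1 - y))) y :=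
    ((((hasDerivAt_id y).const_add 1).log hp.ne').sub
      (((hasDerivAt_id y).const_sub 1).log hm.ne')).const_mul _
  have heq : (fun t => 1 / 2 * (log (1 + t) - log (1 - t))) =ᶠ[nhds y] artanh := by
    filter_upwards [isOpen_Ioo.mem_nhds hy] with t ht
    rw [artanh_eq_half_log (Ioo_subset_Icc_self ht),
      log_div (by linarith [ht.1]) (by linarith [ht.2])]
  refine (hlog.congr_of_eventuallyEq heq.symm).congr_deriv ?_
  rw [show 1 - y ^ 2 = (1 + y) * (1 - y) by ring]
  field_simp
  ring

theorem Real.artanh_neg_eq_neg (x : ℝ) : artanh (-x) = -artanh x := by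
  rw [artanh, artanh, ← log_inv, ← sqrt_inv, inv_div, sub_neg_eq_add, ← sub_eq_add_neg]

theorem intervalIntegral.integral_id_mul_of_symm {f : ℝ → ℝ} {a b : ℝ}
    (hf : IntervalIntegrable f volume a b) (hsymm : ∀ t, f (a + b - t) = f t) :
    ∫ t in a..b, t * f t = (a + b) / 2 * ∫ t in a..b, f t := by
  have hreflect : ∫ t in a..b, t * f t = ∫ t in a..b, (a + b - t) * f t := by
    simpa [hsymm] using (integral_comp_sub_left (fun t => t * f t) (a + b) (a := a) (b := b)).symm
  have hsplit : ∫ t in a..b, (a + b - t) * f t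
      = (a + b) * (∫ t in a..b, f t) - ∫ t in a..b, t * f t := by
    simp only [sub_mul]
    rw [integral_sub (hf.const_mul _) (hf.continuousOn_mul continuousOn_id :
      IntervalIntegrable (fun t => t * f t) volume a b), integral_const_mul]
  linear_combination (hreflect + hsplit) / 2

theorem one_sub_sq_mul_cos_sq_pos {x : ℝ} (hx : |x| < 1) (θ : ℝ) :
    0 < 1 - x ^ 2 * cos θ ^ 2 := by
  have hcos : cos θ ^ 2 ≤ 1 := cos_sq_le_one θ
  have hx2 : x ^ 2 < 1 := by simpa using sq_lt_one_iff_abs_lt_one x |>.mpr hx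
  nlinarith [sq_nonneg x]

theorem integral_sin_div_one_sub_sq_mul_cos_sq {x : ℝ} (hx : |x| < 1) (hx0 : x ≠ 0) :
    ∫ θ in (0)..π, sin θ / (1 - x ^ 2 * cos θ ^ 2) = 2 * artanh x / x := by
  have hxcos : ∀ θ, x * cos θ ∈ Ioo (-1) 1 := fun θ => abs_lt.mp <| by
    rw [abs_mul]; exact (mul_le_of_le_one_right (abs_nonneg x) (abs_cos_le_one θ)).trans_lt hx
  have hden θ := (one_sub_sq_mul_cos_sq_pos hx θ).ne'
  have hderiv : ∀ θ, HasDerivAt (fun t => -artanh (x * cos t) / x)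
      (sin θ / (1 - x ^ 2 * cos θ ^ 2)) θ := fun θ => by
    refine (((hasDerivAt_artanh (hxcos θ)).comp θ
      ((hasDerivAt_cos θ).const_mul x)).neg.div_const x).congr_deriv ?_
    field_simp [hden θ]
  rw [integral_eq_sub_of_hasDerivAt (fun θ _ => hderiv θ)
    ((continuous_sin.div (by fun_prop) hden).intervalIntegrable _ _)]
  simp only [cos_pi, cos_zero, mul_neg, mul_one, artanh_neg_eq_neg]
  ring

theorem stmt_5 (x : ℝ) (hx : |x| < 1) (hx0 : x ≠ 0) :
    ∫ θ in (0:ℝ)..Real.pi, θ * Real.sin θ / (1 - x ^ 2 * Real.cos θ ^ 2)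
      = Real.pi / (2 * x) * Real.log ((1 + x) / (1 - x)) := by
  have hden θ := (one_sub_sq_mul_cos_sq_pos hx θ).ne'
  have hint : IntervalIntegrable (fun θ => sin θ / (1 - x ^ 2 * cos θ ^ 2)) volume 0 π :=
    (continuous_sin.div (by fun_prop) hden).intervalIntegrable _ _
  have hsymm θ : sin (0 + π - θ) / (1 - x ^ 2 * cos (0 + π - θ) ^ 2)
      = sin θ / (1 - x ^ 2 * cos θ ^ 2) := by
    rw [zero_add, sin_pi_sub, cos_pi_sub, neg_sq]
  calc ∫ θ in (0)..π, θ * sin θ / (1 - x ^ 2 * cos θ ^ 2)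
      = ∫ θ in (0)..π, θ * (sin θ / (1 - x ^ 2 * cos θ ^ 2)) := by simp only [mul_div_assoc]
    _ = (0 + π) / 2 * ∫ θ in (0)..π, sin θ / (1 - x ^ 2 * cos θ ^ 2) :=
        integral_id_mul_of_symm hint hsymm
    _ = π / x * artanh x := by
        rw [integral_sin_div_one_sub_sq_mul_cos_sq hx hx0]; ring
    _ = π / (2 * x) * log ((1 + x) / (1 - x)) := by
        rw [artanh_eq_half_log (Ioo_subset_Icc_self (abs_lt.mp hx))]; ring
end

section
/- For all real x ≠ 0, ∫₀^π θ sin θ / (1 + x² cos² θ) dθ = (π/x) · arctan(x). -/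
/-!
The reflection `θ ↦ π - θ` preserves `sin θ / (1 + x² cos² θ)`, so the weight `θ` may be replaced
by its mean `π / 2`. The remaining integral is elementary: `-arctan (x cos θ) / x` is an
antiderivative, giving `2 arctan x / x`.
-/

open MeasureTheory Real intervalIntegral

theorem intervalIntegral.integral_id_mul_of_comp_add_sub {f : ℝ → ℝ} {a b : ℝ}
    (hf : IntervalIntegrable f volume a b) (hsymm : ∀ θ, f (a + b - θ) = f θ) :
    ∫ θ in a..b, θ * f θ = (a + b) / 2 * ∫ θ in a..b, f θ := by
  have hreflect : ∫ θ in a..b, (a + b - θ) * f θ = ∫ θ in a..b, θ * f θ := by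
    simpa [hsymm] using integral_comp_sub_left (a := a) (b := b) (fun θ => θ * f θ) (a + b)
  have hsplit : ∫ θ in a..b, (a + b - θ) * f θ
      = ((a + b) * ∫ θ in a..b, f θ) - ∫ θ in a..b, θ * f θ := by
    simp only [sub_mul]
    rw [integral_sub (hf.const_mul _) (hf.continuousOn_mul (continuousOn_id' _)),
      integral_const_mul]
  linarith

theorem hasDerivAt_arctan_mul_cos (x θ : ℝ) :
    HasDerivAt (fun θ => arctan (x * cos θ)) (-(x * sin θ / (1 + x ^ 2 * cos θ ^ 2))) θ := by
  convert ((hasDerivAt_cos θ).const_mul x).arctan using 1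
  ring

theorem continuous_sin_div_one_add_sq_mul_cos_sq (x : ℝ) :
    Continuous fun θ => sin θ / (1 + x ^ 2 * cos θ ^ 2) :=
  continuous_sin.div (by fun_prop) fun θ => by positivity

theorem integral_sin_div_one_add_sq_mul_cos_sq {x : ℝ} (hx : x ≠ 0) :
    ∫ θ in (0 : ℝ)..π, sin θ / (1 + x ^ 2 * cos θ ^ 2) = 2 / x * arctan x := by
  have hderiv : ∀ θ ∈ Set.uIcc 0 π, HasDerivAt (fun θ => -arctan (x * cos θ) / x)
      (sin θ / (1 + x ^ 2 * cos θ ^ 2)) θ := fun θ _ => by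
    refine ((hasDerivAt_arctan_mul_cos x θ).neg.div_const x).congr_deriv ?_
    field_simp
  rw [integral_eq_sub_of_hasDerivAt hderiv
    ((continuous_sin_div_one_add_sq_mul_cos_sq x).intervalIntegrable _ _)]
  simp only [cos_pi, cos_zero, mul_neg, mul_one, arctan_neg]
  ring

theorem stmt_6 (x : ℝ) (hx0 : x ≠ 0) :
    ∫ θ in (0:ℝ)..Real.pi, θ * Real.sin θ / (1 + x ^ 2 * Real.cos θ ^ 2)
      = Real.pi / x * Real.arctan x := by
  simp only [mul_div_assoc]
  rw [integral_id_mul_of_comp_add_sub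
      ((continuous_sin_div_one_add_sq_mul_cos_sq x).intervalIntegrable _ _)
      (fun θ => by rw [zero_add, sin_pi_sub, cos_pi_sub, neg_sq]),
    integral_sin_div_one_add_sq_mul_cos_sq hx0]
  ring
end

section
/- For every positive integer j, ∫₀^{π/2} exp(cos^j θ · cos(jθ)) · cos(cos^j θ · sin(jθ)) dθ = (π/2) · e^{1/2^j}. -/
/-!
Expanding `exp (cos^j θ · e^{ijθ})` in its power series and taking real parts gives the integrand
as `∑ₙ cos^{jn} θ · cos (jnθ) / n!`. The classical integral
`∫₀^{π/2} cos^m θ cos (mθ) dθ = π / 2^{m+1}` (differentiating `cos^{m+1} θ · sin ((m+1)θ)`,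
whose boundary terms vanish, shows that it halves from `m` to `m + 1`) turns the termwise
integral into `(π/2) ∑ₙ 2^{-jn} / n! = (π/2) e^{2^{-j}}`; the termwise integration is dominated by `1/n!`.
-/

open Real intervalIntegral
open scoped Nat

lemma hasDerivAt_cos_pow_succ_mul_sin (m : ℕ) (θ : ℝ) :
    HasDerivAt (fun θ => cos θ ^ (m + 1) * sin ((m + 1) * θ))
      ((m + 1) * (2 * (cos θ ^ (m + 1) * cos ((m + 1) * θ)) - cos θ ^ m * cos (m * θ))) θ := by
  have hpow : HasDerivAt (fun θ => cos θ ^ (m + 1)) ((m + 1) * cos θ ^ m * -sin θ) θ := by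
    simpa using (hasDerivAt_cos θ).fun_pow (m + 1)
  have hsin : HasDerivAt (fun θ => sin ((m + 1) * θ)) (cos ((m + 1) * θ) * (m + 1)) θ := by
    simpa using ((hasDerivAt_id θ).const_mul ((m : ℝ) + 1)).sin
  have hcos : cos (m * θ) = cos θ * cos ((m + 1) * θ) + sin θ * sin ((m + 1) * θ) := by
    rw [show (m : ℝ) * θ = (m + 1) * θ - θ by ring, cos_sub]
    ring
  refine (hpow.mul hsin).congr_deriv ?_
  rw [hcos]
  ring

lemma integral_cos_pow_succ_mul_cos (m : ℕ) :
    ∫ θ in (0 : ℝ)..π / 2, cos θ ^ (m + 1) * cos ((m + 1) * θ)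
      = (∫ θ in (0 : ℝ)..π / 2, cos θ ^ m * cos (m * θ)) / 2 := by
  have hFTC := integral_eq_sub_of_hasDerivAt (a := 0) (b := π / 2)
    (fun θ _ => hasDerivAt_cos_pow_succ_mul_sin m θ)
    (by apply Continuous.intervalIntegrable; fun_prop)
  have hint (k : ℕ) (c : ℝ) :
      IntervalIntegrable (fun θ => cos θ ^ k * cos (c * θ)) MeasureTheory.volume 0 (π / 2) := by
    apply Continuous.intervalIntegrable; fun_prop
  simp only [cos_pi_div_two, mul_zero, sin_zero, ne_eq, add_eq_zero, one_ne_zero, and_false,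
    not_false_eq_true, zero_pow, zero_mul, sub_zero] at hFTC
  rw [integral_const_mul, integral_sub ((hint (m + 1) _).const_mul 2) (hint m _),
    integral_const_mul] at hFTC
  have hm : (m : ℝ) + 1 ≠ 0 := by positivity
  linarith [(mul_eq_zero.mp hFTC).resolve_left hm]

lemma integral_cos_pow_mul_cos (m : ℕ) :
    ∫ θ in (0 : ℝ)..π / 2, cos θ ^ m * cos (m * θ) = π / 2 ^ (m + 1) := by
  induction m with
  | zero => simp
  | succ m ih =>
    push_cast
    rw [integral_cos_pow_succ_mul_cos, ih, pow_succ _ (m + 1)]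
    ring

lemma hasSum_pow_mul_cos_div_factorial (r t : ℝ) :
    HasSum (fun n : ℕ => r ^ n * cos (n * t) / n !) (exp (r * cos t) * cos (r * sin t)) := by
  set z : ℂ := r * Complex.exp (t * Complex.I)
  have hexp : HasSum (fun n : ℕ => z ^ n / n !) (Complex.exp z) := by
    rw [Complex.exp_eq_exp_ℂ]
    exact NormedSpace.expSeries_div_hasSum_exp z
  convert Complex.hasSum_re hexp using 1
  · ext n
    rw [mul_pow, ← Complex.exp_nat_mul, ← mul_assoc, ← Complex.ofReal_natCast,
      ← Complex.ofReal_mul, ← Complex.ofReal_pow, Complex.div_natCast_re, Complex.re_ofReal_mul,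
      Complex.exp_ofReal_mul_I_re]
  · rw [Complex.exp_re, Complex.re_ofReal_mul, Complex.im_ofReal_mul,
      Complex.exp_ofReal_mul_I_re, Complex.exp_ofReal_mul_I_im]

lemma norm_pow_mul_cos_div_factorial_le {r : ℝ} (hr : |r| ≤ 1) (n : ℕ) (x : ℝ) :
    ‖r ^ n * cos x / (n ! : ℝ)‖ ≤ 1 / n ! := by
  rw [norm_div, norm_mul, norm_pow, Real.norm_natCast]
  gcongr
  exact mul_le_one₀ (pow_le_one₀ (norm_nonneg r) hr) (norm_nonneg _) (abs_cos_le_one x)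

lemma integral_cos_pow_pow_mul_cos_div_factorial (j n : ℕ) :
    ∫ θ in (0 : ℝ)..π / 2, (cos θ ^ j) ^ n * cos (n * (j * θ)) / n !
      = π / 2 * ((1 / 2 ^ j) ^ n / n !) := by
  have hcast (θ : ℝ) : (n : ℝ) * (j * θ) = ((j * n : ℕ) : ℝ) * θ := by push_cast; ring
  simp_rw [← pow_mul, hcast]
  rw [integral_div, integral_cos_pow_mul_cos, pow_succ, div_pow, one_pow, ← pow_mul]
  ring

theorem stmt_9_general (j : ℕ) :
    ∫ θ in (0:ℝ)..(Real.pi / 2),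
        Real.exp (Real.cos θ ^ j * Real.cos (j * θ)) *
          Real.cos (Real.cos θ ^ j * Real.sin (j * θ))
      = Real.pi / 2 * Real.exp (1 / 2 ^ j) := by
  have hsummable : Summable fun n : ℕ => (1 : ℝ) / n ! := by
    simpa using Real.summable_pow_div_factorial 1
  have hcos_pow (θ : ℝ) : |cos θ ^ j| ≤ 1 := by
    rw [abs_pow]
    exact pow_le_one₀ (abs_nonneg _) (abs_cos_le_one θ)
  have htermwise := hasSum_integral_of_dominated_convergence (μ := MeasureTheory.volume)
    (a := 0) (b := π / 2) (fun n _ => 1 / n !)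
    (fun n => (by fun_prop : Continuous _).aestronglyMeasurable)
    (fun n => .of_forall fun θ _ => norm_pow_mul_cos_div_factorial_le (hcos_pow θ) n _)
    (.of_forall fun _ _ => hsummable) intervalIntegrable_const
    (.of_forall fun θ _ => hasSum_pow_mul_cos_div_factorial (cos θ ^ j) (j * θ))
  rw [funext (integral_cos_pow_pow_mul_cos_div_factorial j)] at htermwise
  refine htermwise.unique ?_
  have hexp := NormedSpace.expSeries_div_hasSum_exp ((1 : ℝ) / 2 ^ j)
  rw [← exp_eq_exp_ℝ] at hexp
  exact hexp.mul_left _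

theorem stmt_9 (j : ℕ) (hj : 0 < j) :
    ∫ θ in (0:ℝ)..(Real.pi / 2),
        Real.exp (Real.cos θ ^ j * Real.cos (j * θ)) *
          Real.cos (Real.cos θ ^ j * Real.sin (j * θ))
      = Real.pi / 2 * Real.exp (1 / 2 ^ j) :=
  stmt_9_general j
end

section
/- ∫₀^{π/2} exp(cos³θ · cos 3θ) · cos(cos³θ · sin 3θ) dθ = (π/2) · e^{1/8}. -/
open Complex intervalIntegral

noncomputable def stmtF : ℂ → ℂ := fun w => Complex.exp (((1 + w)/2)^3)

lemma stmtF_diff : Differentiable ℂ stmtF := by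
  unfold stmtF; fun_prop

lemma stmtF_cauchy : ∫ θ in (0:ℝ)..(2*Real.pi), stmtF (Complex.exp (θ*Complex.I))
    = 2*Real.pi*Complex.exp (1/8) := by
  have hd : DifferentiableOn ℂ stmtF (Metric.closedBall 0 1) := stmtF_diff.differentiableOn
  have h := hd.circleIntegral_sub_inv_smul (w := 0) (Metric.mem_ball_self one_pos)
  rw [circleIntegral] at h
  simp only [deriv_circleMap, circleMap_zero, one_mul, sub_zero, smul_eq_mul,
    Complex.ofReal_one] at h
  have h2 : ∀ θ : ℝ, Complex.exp (θ*Complex.I) * Complex.I *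
      ((Complex.exp (θ*Complex.I))⁻¹ * stmtF (Complex.exp (θ*Complex.I)))
      = Complex.I * stmtF (Complex.exp (θ*Complex.I)) := by
    intro θ
    have := Complex.exp_ne_zero ((θ:ℂ)*Complex.I)
    field_simp
  simp only [h2] at h
  rw [intervalIntegral.integral_const_mul] at h
  have hF0 : stmtF 0 = Complex.exp (1/8) := by
    unfold stmtF; norm_num
  rw [hF0] at h
  have h3 : Complex.I * (∫ θ in (0:ℝ)..(2*Real.pi), stmtF (Complex.exp (θ*Complex.I)))
      = Complex.I * (2*Real.pi*Complex.exp (1/8)) := h.trans (by ring)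
  exact mul_left_cancel₀ Complex.I_ne_zero h3

lemma stmt_e1 (θ : ℝ) : (1 + Complex.exp (2*θ*Complex.I))/2
    = (Real.cos θ : ℂ) * Complex.exp (θ*Complex.I) := by
  have h2 : (2*(θ:ℂ)*Complex.I) = ((2*θ:ℝ):ℂ)*Complex.I := by push_cast; ring
  rw [h2, Complex.exp_mul_I, Complex.exp_mul_I, ← Complex.ofReal_cos, ← Complex.ofReal_sin,
    ← Complex.ofReal_cos, ← Complex.ofReal_sin, Complex.ext_iff]
  constructor <;>
    simp [-Complex.ofReal_cos, -Complex.ofReal_sin, ← Complex.ofReal_pow,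
      Real.cos_two_mul, Real.sin_two_mul] <;>
    ring

lemma stmt_e3 (θ : ℝ) : ((1 + Complex.exp (2*θ*Complex.I))/2)^3
    = ((Real.cos θ ^ 3 * Real.cos (3*θ) : ℝ) : ℂ)
      + ((Real.cos θ ^ 3 * Real.sin (3*θ) : ℝ) : ℂ) * Complex.I := by
  rw [stmt_e1, mul_pow, ← Complex.exp_nat_mul]
  have h3 : (3:ℕ) * ((θ:ℂ) * Complex.I) = ((3*θ:ℝ):ℂ) * Complex.I := by push_cast; ring
  rw [h3, Complex.exp_mul_I, ← Complex.ofReal_cos, ← Complex.ofReal_sin]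
  push_cast
  ring

lemma stmt_point (θ : ℝ) :
    Real.exp (Real.cos θ ^ 3 * Real.cos (3 * θ)) * Real.cos (Real.cos θ ^ 3 * Real.sin (3 * θ))
      = (stmtF (Complex.exp (2*θ*Complex.I))).re := by
  unfold stmtF
  rw [stmt_e3, Complex.exp_re]
  norm_num [-Complex.ofReal_cos, -Complex.ofReal_sin, ← Complex.ofReal_pow, Complex.add_re,
    Complex.add_im, Complex.ofReal_re, Complex.ofReal_im, Complex.mul_I_re, Complex.mul_I_im]

noncomputable def stmtg : ℝ → ℝ := fun θ => (stmtF (Complex.exp (2*θ*Complex.I))).re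

lemma stmtg_cont : Continuous stmtg := by
  unfold stmtg stmtF
  fun_prop

lemma stmtF_conj (w : ℂ) : stmtF (starRingEnd ℂ w) = starRingEnd ℂ (stmtF w) := by
  unfold stmtF
  rw [← Complex.exp_conj]
  congr 1
  rw [map_pow, map_div₀, map_add, map_one]
  norm_num [map_ofNat]

lemma stmtg_sym (θ : ℝ) : stmtg (Real.pi - θ) = stmtg θ := by
  unfold stmtg
  have e : Complex.exp (2*((Real.pi - θ : ℝ):ℂ)*Complex.I)
      = starRingEnd ℂ (Complex.exp (2*θ*Complex.I)) := by
    have h1 : (2*((Real.pi - θ : ℝ):ℂ)*Complex.I)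
        = 2*Real.pi*Complex.I + (-(2*θ*Complex.I)) := by push_cast; ring
    have h2 : -(2*(θ:ℂ)*Complex.I) = starRingEnd ℂ (2*θ*Complex.I) := by
      rw [show (2*(θ:ℂ)*Complex.I) = ((2*θ:ℝ):ℂ)*Complex.I by push_cast; ring,
        map_mul, Complex.conj_ofReal, Complex.conj_I]
      push_cast; ring
    rw [h1, Complex.exp_add, Complex.exp_two_pi_mul_I, one_mul, h2, Complex.exp_conj]
  rw [e, stmtF_conj, Complex.conj_re]

lemma stmtg_half : ∫ θ in (0:ℝ)..(Real.pi), stmtg θ = Real.pi * Real.exp (1/8) := by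
  have hc : Continuous fun s : ℝ => stmtF (Complex.exp (s*Complex.I)) := by
    unfold stmtF; fun_prop
  have hint : IntervalIntegrable (fun s : ℝ => stmtF (Complex.exp (s*Complex.I)))
      MeasureTheory.volume 0 (2*Real.pi) := hc.intervalIntegrable _ _
  have h := intervalIntegral.integral_comp_mul_left
      (f := fun s : ℝ => (stmtF (Complex.exp (s*Complex.I))).re) (a := (0:ℝ)) (b := Real.pi)
      (c := (2:ℝ)) two_ne_zero
  simp only [mul_zero, smul_eq_mul] at h
  have key : (∫ θ in (0:ℝ)..Real.pi, stmtg θ)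
      = 2⁻¹ * ∫ s in (0:ℝ)..(2*Real.pi), (stmtF (Complex.exp (s*Complex.I))).re := by
    rw [← h]
    apply intervalIntegral.integral_congr
    intro θ _
    unfold stmtg
    norm_cast
  rw [key]
  have hre := Complex.reCLM.intervalIntegral_comp_comm hint
  simp only [Complex.reCLM_apply] at hre
  rw [hre, stmtF_cauchy]
  rw [show ((1:ℂ)/8) = ((1/8:ℝ):ℂ) by norm_num, show ((2:ℂ)*Real.pi) = ((2*Real.pi:ℝ):ℂ) by push_cast; ring,
    ← Complex.ofReal_exp, ← Complex.ofReal_mul, Complex.ofReal_re]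
  ring

theorem stmt_10 :
    ∫ θ in (0:ℝ)..(Real.pi / 2),
        Real.exp (Real.cos θ ^ 3 * Real.cos (3 * θ)) *
          Real.cos (Real.cos θ ^ 3 * Real.sin (3 * θ))
      = Real.pi / 2 * Real.exp (1 / 8) := by
  have hg : ∀ θ : ℝ, Real.exp (Real.cos θ ^ 3 * Real.cos (3 * θ)) *
      Real.cos (Real.cos θ ^ 3 * Real.sin (3 * θ)) = stmtg θ := fun θ => stmt_point θ
  simp only [hg]
  have hsplit : (∫ θ in (0:ℝ)..Real.pi, stmtg θ)
      = (∫ θ in (0:ℝ)..(Real.pi/2), stmtg θ) + ∫ θ in (Real.pi/2)..Real.pi, stmtg θ := by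
    rw [intervalIntegral.integral_add_adjacent_intervals] <;>
      exact stmtg_cont.intervalIntegrable _ _
  have hmirror : (∫ θ in (Real.pi/2)..Real.pi, stmtg θ) = ∫ θ in (0:ℝ)..(Real.pi/2), stmtg θ := by
    have := intervalIntegral.integral_comp_sub_left (a := (0:ℝ)) (b := Real.pi/2) stmtg Real.pi
    rw [show Real.pi - Real.pi/2 = Real.pi/2 by ring, show Real.pi - 0 = Real.pi by ring] at this
    rw [← this]
    apply intervalIntegral.integral_congr
    intro θ _
    exact stmtg_sym θ
  have := stmtg_half
  rw [hsplit, hmirror] at this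
  linarith
end

section
/- For all real x, ∫₀^π θ sin θ · √(1 + x² cos² θ) dθ = (π/(2x)) · (x√(1+x²) + log(x + √(1+x²))) for x ≠ 0 (and equals π at x = 0). -/
/-!
The integrand has the form `θ * h θ` with `h (π - θ) = h θ`, so the substitution `θ ↦ π - θ`
gives `∫₀^π θ h = (π / 2) ∫₀^π h`. Since `h θ = sin θ * √(1 + x² cos² θ)`, the substitution
`u = cos θ` turns `∫₀^π h` into the elementary integral `∫₋₁¹ √(1 + x² u²)`.
-/

open Real intervalIntegral
open MeasureTheory (volume)

theorem integral_id_mul_of_symmetric {h : ℝ → ℝ} {a b : ℝ}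
    (hint : IntervalIntegrable h volume a b)
    (hsymm : ∀ θ, h (a + b - θ) = h θ) :
    ∫ θ in a..b, θ * h θ = (a + b) / 2 * ∫ θ in a..b, h θ := by
  have hreflect : ∫ θ in a..b, θ * h θ = ∫ θ in a..b, (a + b - θ) * h θ := by
    have := integral_comp_sub_left (fun θ => θ * h θ) (a + b) (a := a) (b := b)
    simp only [add_sub_cancel_right, add_sub_cancel_left, hsymm] at this
    exact this.symm
  have hsplit : ∫ θ in a..b, (a + b - θ) * h θ
      = (a + b) * (∫ θ in a..b, h θ) - ∫ θ in a..b, θ * h θ := by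
    have hint_id : IntervalIntegrable (fun θ => θ * h θ) volume a b :=
      hint.continuousOn_mul continuousOn_id
    simp only [sub_mul]
    rw [integral_sub (hint.const_mul _) hint_id, integral_const_mul]
  linarith

theorem integral_sin_mul_comp_cos {g : ℝ → ℝ} (hg : Continuous g) :
    ∫ θ in (0:ℝ)..π, sin θ * g (cos θ) = ∫ u in (-1:ℝ)..1, g u := by
  have hsubst := integral_comp_mul_deriv (fun θ _ => hasDerivAt_cos θ)
    continuous_sin.neg.continuousOn hg (a := 0) (b := π)
  rw [cos_zero, cos_pi, Function.comp_def] at hsubst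
  rw [← neg_neg (∫ u in (-1:ℝ)..1, g u), ← integral_symm, ← hsubst, ← integral_neg]
  simp only [mul_neg, neg_neg, mul_comm]

theorem hasDerivAt_antideriv_sqrt_one_add_sq_mul_sq {c : ℝ} (hc : c ≠ 0) (u : ℝ) :
    HasDerivAt (fun u => u * √(1 + c ^ 2 * u ^ 2) / 2 + arsinh (c * u) / (2 * c))
      (√(1 + c ^ 2 * u ^ 2)) u := by
  have hpos : 0 < 1 + c ^ 2 * u ^ 2 := by positivity
  have hsqrt : HasDerivAt (fun u => √(1 + c ^ 2 * u ^ 2))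
      (c ^ 2 * (2 * u) / (2 * √(1 + c ^ 2 * u ^ 2))) u := by
    simpa using (((hasDerivAt_pow 2 u).const_mul (c ^ 2)).const_add 1).sqrt hpos.ne'
  have harsinh : HasDerivAt (fun u => arsinh (c * u)) ((√(1 + c ^ 2 * u ^ 2))⁻¹ * c) u := by
    simpa [mul_pow] using ((hasDerivAt_id u).const_mul c).arsinh
  refine ((((hasDerivAt_id u).mul hsqrt).div_const 2).add
    (harsinh.div_const (2 * c))).congr_deriv ?_
  have hsq : √(1 + c ^ 2 * u ^ 2) ^ 2 = 1 + c ^ 2 * u ^ 2 := sq_sqrt hpos.le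
  field_simp
  simp only [id]
  linear_combination -hsq

theorem integral_sqrt_one_add_sq_mul_sq {c : ℝ} (hc : c ≠ 0) :
    ∫ u in (-1:ℝ)..1, √(1 + c ^ 2 * u ^ 2) = √(1 + c ^ 2) + arsinh c / c := by
  rw [integral_eq_sub_of_hasDerivAt (fun u _ => hasDerivAt_antideriv_sqrt_one_add_sq_mul_sq hc u)
    ((by fun_prop : Continuous fun u => √(1 + c ^ 2 * u ^ 2)).intervalIntegrable _ _)]
  simp only [mul_one, mul_neg, arsinh_neg, neg_sq, one_pow]
  field_simp
  ring

theorem stmt_11 (x : ℝ) :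
    (x ≠ 0 →
      ∫ θ in (0:ℝ)..Real.pi, θ * Real.sin θ * Real.sqrt (1 + x ^ 2 * Real.cos θ ^ 2)
        = Real.pi / (2 * x) *
          (x * Real.sqrt (1 + x ^ 2) + Real.log (x + Real.sqrt (1 + x ^ 2)))) ∧
    (x = 0 →
      ∫ θ in (0:ℝ)..Real.pi, θ * Real.sin θ * Real.sqrt (1 + x ^ 2 * Real.cos θ ^ 2)
        = Real.pi) := by
  have hreduce : ∫ θ in (0:ℝ)..π, θ * sin θ * √(1 + x ^ 2 * cos θ ^ 2)
      = π / 2 * ∫ u in (-1:ℝ)..1, √(1 + x ^ 2 * u ^ 2) := by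
    simp only [mul_assoc]
    rw [integral_id_mul_of_symmetric
      ((by fun_prop : Continuous fun θ => sin θ * √(1 + x ^ 2 * cos θ ^ 2)).intervalIntegrable _ _)
      (fun θ => by rw [zero_add, sin_pi_sub, cos_pi_sub, neg_sq]),
      integral_sin_mul_comp_cos (g := fun u => √(1 + x ^ 2 * u ^ 2)) (by fun_prop), zero_add]
  refine ⟨fun hx => ?_, fun hx => ?_⟩
  · rw [hreduce, integral_sqrt_one_add_sq_mul_sq hx, arsinh]
    field_simp
  · subst hx
    rw [hreduce]
    norm_num
end

section
/- For real x with |x| < 1, ∫₀^π θ sin³θ · ((1 + x cos θ)^{1/2} + (1 − x cos θ)^{1/2}) dθ = (8π/(105 x³)) · (√(1−x)(2 + x − 8x² + 5x³) + √(1+x)(−2 + x + 8x² + 5x³)) for x ≠ 0. -/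
/-!
The integrand is `θ · h θ` with `h` invariant under `θ ↦ π - θ`, so the integral is
`π/2 · ∫₀^π h`. Substituting `u = 1 ± x cos θ` turns `x³ sin³ θ √(1 ± x cos θ) dθ` into
`∓ √u (x² - 1 + 2u - u²) du`, a polynomial in `√u`, which gives `h` an elementary primitive.
-/

open Real intervalIntegral MeasureTheory

theorem intervalIntegral.integral_id_mul_of_comp_sub_left_eq {a : ℝ} {f : ℝ → ℝ}
    (hf : IntervalIntegrable f volume 0 a) (hsymm : ∀ θ, f (a - θ) = f θ) :
    ∫ θ in (0:ℝ)..a, θ * f θ = a / 2 * ∫ θ in (0:ℝ)..a, f θ := by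
  have hid : IntervalIntegrable (fun θ => θ * f θ) volume 0 a :=
    hf.continuousOn_mul continuousOn_id
  have hreflect : ∫ θ in (0:ℝ)..a, (a - θ) * f θ = ∫ θ in (0:ℝ)..a, θ * f θ := by
    simpa only [hsymm, sub_zero, sub_self] using
      integral_comp_sub_left (fun θ => θ * f θ) a (a := 0) (b := a)
  have hsplit : ∫ θ in (0:ℝ)..a, (a - θ) * f θ =
      a * (∫ θ in (0:ℝ)..a, f θ) - ∫ θ in (0:ℝ)..a, θ * f θ := by
    simp only [sub_mul]
    rw [integral_sub (hf.const_mul a) hid, intervalIntegral.integral_const_mul]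
  linarith

noncomputable def sqrtSubstPrimitive (x u : ℝ) : ℝ :=
  √u * (2 / 3 * (x ^ 2 - 1) * u + 4 / 5 * u ^ 2 - 2 / 7 * u ^ 3)

theorem hasDerivAt_sqrtSubstPrimitive (x : ℝ) {u : ℝ} (hu : 0 < u) :
    HasDerivAt (sqrtSubstPrimitive x) (√u * (x ^ 2 - 1 + 2 * u - u ^ 2)) u := by
  have hpoly : HasDerivAt (fun u : ℝ => 2 / 3 * (x ^ 2 - 1) * u + 4 / 5 * u ^ 2 - 2 / 7 * u ^ 3)
      (2 / 3 * (x ^ 2 - 1) + 8 / 5 * u - 6 / 7 * u ^ 2) u := by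
    refine ((((hasDerivAt_id u).const_mul (2 / 3 * (x ^ 2 - 1))).add
      ((hasDerivAt_pow 2 u).const_mul (4 / 5))).sub
      ((hasDerivAt_pow 3 u).const_mul (2 / 7))).congr_deriv ?_
    ring
  refine ((hasDerivAt_sqrt hu.ne').mul hpoly).congr_deriv ?_
  obtain ⟨s, hs, rfl⟩ : ∃ s, 0 < s ∧ u = s ^ 2 := ⟨√u, sqrt_pos.mpr hu, (sq_sqrt hu.le).symm⟩
  rw [sqrt_sq hs.le]
  field_simp
  ring

theorem hasDerivAt_sqrtSubstPrimitive_comp_cos {x : ℝ} (hx : |x| < 1) (θ : ℝ) :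
    HasDerivAt
      (fun θ => sqrtSubstPrimitive x (1 - x * cos θ) - sqrtSubstPrimitive x (1 + x * cos θ))
      (x ^ 3 * (sin θ ^ 3 * (√(1 + x * cos θ) + √(1 - x * cos θ)))) θ := by
  have hxcos : |x * cos θ| < 1 := (abs_mul x (cos θ)).trans_lt
    (mul_lt_one_of_nonneg_of_lt_one_left (abs_nonneg x) hx (abs_cos_le_one θ))
  have hplus : 0 < 1 + x * cos θ := by linarith [neg_lt_of_abs_lt hxcos]
  have hminus : 0 < 1 - x * cos θ := by linarith [lt_of_abs_lt hxcos]
  have hcos_plus : HasDerivAt (fun θ => 1 + x * cos θ) (-(x * sin θ)) θ := by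
    simpa using ((hasDerivAt_cos θ).const_mul x).const_add 1
  have hcos_minus : HasDerivAt (fun θ => 1 - x * cos θ) (x * sin θ) θ := by
    simpa using ((hasDerivAt_cos θ).const_mul x).const_sub 1
  refine (((hasDerivAt_sqrtSubstPrimitive x hminus).comp θ hcos_minus).sub
    ((hasDerivAt_sqrtSubstPrimitive x hplus).comp θ hcos_plus)).congr_deriv ?_
  have hsin : sin θ ^ 2 = 1 - cos θ ^ 2 := by linarith [sin_sq_add_cos_sq θ]
  rw [show sin θ ^ 3 = sin θ * sin θ ^ 2 by ring, hsin]
  ring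

theorem stmt_16 (x : ℝ) (hx : |x| < 1) (hx0 : x ≠ 0) :
    ∫ θ in (0:ℝ)..Real.pi,
        θ * Real.sin θ ^ 3 *
          (Real.sqrt (1 + x * Real.cos θ) + Real.sqrt (1 - x * Real.cos θ))
      = 8 * Real.pi / (105 * x ^ 3) *
        (Real.sqrt (1 - x) * (2 + x - 8 * x ^ 2 + 5 * x ^ 3) +
          Real.sqrt (1 + x) * (-2 + x + 8 * x ^ 2 + 5 * x ^ 3)) := by
  set h : ℝ → ℝ := fun θ => sin θ ^ 3 * (√(1 + x * cos θ) + √(1 - x * cos θ))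
  have hcont : Continuous h := by fun_prop
  have hsymm : ∀ θ, h (π - θ) = h θ := fun θ => by
    simp only [h, sin_pi_sub, cos_pi_sub]
    ring_nf
  have hftc : ∫ θ in (0:ℝ)..π, x ^ 3 * h θ =
      2 * (sqrtSubstPrimitive x (1 + x) - sqrtSubstPrimitive x (1 - x)) := by
    rw [integral_eq_sub_of_hasDerivAt (fun θ _ => hasDerivAt_sqrtSubstPrimitive_comp_cos hx θ)
      ((hcont.const_mul _).intervalIntegrable 0 π)]
    simp only [cos_pi, cos_zero]
    ring_nf
  rw [intervalIntegral.integral_const_mul, mul_comm, ← eq_div_iff (pow_ne_zero 3 hx0)] at hftc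
  calc ∫ θ in (0:ℝ)..π, θ * sin θ ^ 3 * (√(1 + x * cos θ) + √(1 - x * cos θ))
      = ∫ θ in (0:ℝ)..π, θ * h θ := by simp only [h, mul_assoc]
    _ = π / 2 * ∫ θ in (0:ℝ)..π, h θ :=
        integral_id_mul_of_comp_sub_left_eq (hcont.intervalIntegrable 0 π) hsymm
    _ = _ := by
        rw [hftc]
        unfold sqrtSubstPrimitive
        field_simp
        ring
end
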